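/- arXiv:2502.18475 — 2 statements merged into one kernel-verified Lean document; each statement's English description precedes it below -/
import Mathlib

section
/- Fix η ∈ ℝ^m, assume the local domination hypothesis at η, and suppose F_η is invertible and ε > 0. Let l(η') = uKL(q_{η'} ∣ π) and φ(η) = F_η⁻¹ z_η. Then the relaxed fixed-point iterate satisfies ε φ(η) + (1 − ε) η = η − (ε / Z_η) F_η⁻¹ ∇l(η), where ∇l(η) is the gradient of l at η; that is, one step of the LSVI recursion with step size ε equals one natural-gradient-descent step on the unnormalised KL objective with step size ε / Z_η. -/
open MeasureTheory Matrix

noncomputable section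

/-- The continuous linear functional `v ↦ g ⬝ᵥ v` on `ℝ^m`, used to express gradients. -/
def dotCLM {m : ℕ} (g : Fin m → ℝ) : (Fin m → ℝ) →L[ℝ] ℝ :=
  ∑ i, g i • ContinuousLinearMap.proj i

/-!
Differentiation under the integral sign gives
`∇l(η) = ∫ e^{η ⬝ s} (η ⬝ s - f) s dμ = Z_η (F_η η - z_η)`: the two `e^{η ⬝ s}` terms coming from
the entropy part and from `- ∫ q_η` cancel. Hence `F_η⁻¹ ∇l(η) = Z_η (η - φ(η))`, and the claim is
linear algebra. The domination hypothesis, stated for each `η'` separately, holds a.e. uniformly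
on `U` because the dominated quantity is continuous in `η'` and `U` is separable.
-/

open Filter Topology TopologicalSpace

theorem ae_forall_mem_of_isClosed {ι α : Type*} [TopologicalSpace ι] [PseudoMetrizableSpace ι]
    [SeparableSpace ι] [MeasurableSpace α] {μ : Measure α} {S : Set ι} {p : ι → α → Prop}
    (hp : ∀ a, IsClosed {y | p y a}) (h : ∀ y ∈ S, ∀ᵐ a ∂μ, p y a) :
    ∀ᵐ a ∂μ, ∀ y ∈ S, p y a := by
  obtain ⟨t, hts, htc, hSt⟩ := (IsSeparable.of_separableSpace S).exists_countable_dense_subset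
  filter_upwards [(ae_ball_iff htc).2 fun y hy => h y (hts hy)] with a ha y hy
  exact closure_minimal ha (hp a) (hSt hy)

theorem smul_inv_mulVec_add_one_sub_smul_eq {n K : Type*} [Fintype n] [DecidableEq n] [Field K]
    {F : Matrix n n K} (hF : IsUnit F.det) {Z : K} (hZ : Z ≠ 0) (ε : K) (η z : n → K) :
    ε • (F⁻¹ *ᵥ z) + (1 - ε) • η = η - (ε / Z) • (F⁻¹ *ᵥ (Z • (F *ᵥ η - z))) := by
  rw [mulVec_smul, mulVec_sub, mulVec_mulVec, nonsing_inv_mul F hF, one_mulVec, smul_smul,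
    div_mul_cancel₀ ε hZ]
  module

section dotCLM

variable {m : ℕ}

lemma dotCLM_apply (g v : Fin m → ℝ) : dotCLM g v = g ⬝ᵥ v := by
  simp [dotCLM, dotProduct]

lemma dotCLM_apply_single (g : Fin m → ℝ) (i : Fin m) : dotCLM g (Pi.single i 1) = g i := by
  rw [dotCLM_apply, dotProduct_single, mul_one]

lemma hasFDerivAt_dotProduct_left (v y : Fin m → ℝ) :
    HasFDerivAt (fun w : Fin m → ℝ => w ⬝ᵥ v) (dotCLM v) y := by
  have h : (fun w : Fin m → ℝ => w ⬝ᵥ v) = dotCLM v :=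
    funext fun w => by rw [dotCLM_apply, dotProduct_comm]
  exact h ▸ (dotCLM v).hasFDerivAt

lemma continuous_dotCLM : Continuous (dotCLM (m := m)) := by
  unfold dotCLM; fun_prop

lemma norm_dotCLM_le_sum_abs (v : Fin m → ℝ) : ‖dotCLM v‖ ≤ ∑ i, |v i| := by
  refine ContinuousLinearMap.opNorm_le_bound _ (by positivity) fun u => ?_
  rw [dotCLM_apply, Finset.sum_mul]
  refine (Finset.abs_sum_le_sum_abs _ _).trans (Finset.sum_le_sum fun i _ => ?_)
  rw [abs_mul]
  exact mul_le_mul_of_nonneg_left (norm_le_pi_norm u i) (abs_nonneg _)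

end dotCLM

section SumSq

variable {m : ℕ} (v : Fin m → ℝ)

lemma sq_le_sum_sq (i : Fin m) : v i ^ 2 ≤ ∑ j, v j ^ 2 :=
  Finset.single_le_sum (fun j _ => sq_nonneg (v j)) (Finset.mem_univ i)

lemma one_le_one_add_sum_sq : 1 ≤ 1 + ∑ i, v i ^ 2 :=
  le_add_of_nonneg_right (Finset.sum_nonneg fun i _ => sq_nonneg (v i))

lemma abs_le_one_add_sum_sq (i : Fin m) : |v i| ≤ 1 + ∑ j, v j ^ 2 := by
  nlinarith [sq_le_sum_sq v i, sq_nonneg (|v i| - 1), sq_abs (v i)]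

lemma abs_mul_le_one_add_sum_sq (i j : Fin m) : |v i * v j| ≤ 1 + ∑ k, v k ^ 2 := by
  rw [abs_mul]
  nlinarith [sq_le_sum_sq v i, sq_le_sum_sq v j, sq_nonneg (|v i| - |v j|), sq_abs (v i),
    sq_abs (v j)]

lemma norm_dotCLM_le_card_mul : ‖dotCLM v‖ ≤ m * (1 + ∑ i, v i ^ 2) :=
  calc ‖dotCLM v‖ ≤ ∑ i, |v i| := norm_dotCLM_le_sum_abs v
    _ ≤ ∑ _i : Fin m, (1 + ∑ j, v j ^ 2) :=
      Finset.sum_le_sum fun i _ => abs_le_one_add_sum_sq v i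
    _ = m * (1 + ∑ i, v i ^ 2) := by simp [mul_add]

end SumSq

/-- The local domination hypothesis `hdom` of `stmt5` reads `domWeight (s x) η' (f x) ≤ g x`. -/
def domWeight {m : ℕ} (v y : Fin m → ℝ) (c : ℝ) : ℝ :=
  (1 + ∑ i, v i ^ 2) * (1 + |y ⬝ᵥ v| + |c|) * Real.exp (y ⬝ᵥ v)

section domWeight

variable {m : ℕ} {v y : Fin m → ℝ} {c : ℝ}

lemma continuous_domWeight (v : Fin m → ℝ) (c : ℝ) : Continuous fun y => domWeight v y c := by
  unfold domWeight; fun_prop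

lemma abs_mul_mul_exp_le_domWeight {a b : ℝ} (ha : |a| ≤ 1 + |y ⬝ᵥ v| + |c|)
    (hb : |b| ≤ 1 + ∑ i, v i ^ 2) : |a * b * Real.exp (y ⬝ᵥ v)| ≤ domWeight v y c := by
  rw [abs_mul, abs_mul, Real.abs_exp, domWeight, mul_comm |a|]
  gcongr

lemma one_le_one_add_abs_add_abs (t c : ℝ) : 1 ≤ 1 + |t| + |c| := by
  linarith [abs_nonneg t, abs_nonneg c]

lemma abs_sub_le_one_add_abs_add_abs (t c : ℝ) : |t - c| ≤ 1 + |t| + |c| := by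
  linarith [abs_sub t c]

lemma exp_le_domWeight : Real.exp (y ⬝ᵥ v) ≤ domWeight v y c := by
  simpa using abs_mul_mul_exp_le_domWeight (a := 1) (b := 1)
    (abs_one.trans_le (one_le_one_add_abs_add_abs _ c))
    (abs_one.trans_le (one_le_one_add_sum_sq v))

lemma abs_exp_mul_sub_le_domWeight : |Real.exp (y ⬝ᵥ v) * (y ⬝ᵥ v - c)| ≤ domWeight v y c := by
  simpa [mul_comm] using abs_mul_mul_exp_le_domWeight (b := 1)
    (abs_sub_le_one_add_abs_add_abs _ c) (abs_one.trans_le (one_le_one_add_sum_sq v))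

lemma norm_smul_dotCLM_le_domWeight :
    ‖(Real.exp (y ⬝ᵥ v) * (y ⬝ᵥ v - c)) • dotCLM v‖ ≤ m * domWeight v y c :=
  calc ‖(Real.exp (y ⬝ᵥ v) * (y ⬝ᵥ v - c)) • dotCLM v‖
      ≤ |Real.exp (y ⬝ᵥ v) * (y ⬝ᵥ v - c)| * (m * (1 + ∑ i, v i ^ 2)) := by
        rw [norm_smul, Real.norm_eq_abs]
        gcongr
        exact norm_dotCLM_le_card_mul v
    _ = m * |(y ⬝ᵥ v - c) * (1 + ∑ i, v i ^ 2) * Real.exp (y ⬝ᵥ v)| := by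
        rw [abs_mul, abs_mul, abs_mul, abs_of_pos (zero_lt_one.trans_le (one_le_one_add_sum_sq v))]
        ring
    _ ≤ m * domWeight v y c := by
        gcongr
        exact abs_mul_mul_exp_le_domWeight (abs_sub_le_one_add_abs_add_abs _ c)
          (abs_of_nonneg (zero_le_one.trans (one_le_one_add_sum_sq v))).le

end domWeight

lemma hasFDerivAt_exp_dotProduct_mul_sub_sub {m : ℕ} (v y : Fin m → ℝ) (c : ℝ) :
    HasFDerivAt (fun w => Real.exp (w ⬝ᵥ v) * (w ⬝ᵥ v - c) - Real.exp (w ⬝ᵥ v))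
      ((Real.exp (y ⬝ᵥ v) * (y ⬝ᵥ v - c)) • dotCLM v) y := by
  have hdot := hasFDerivAt_dotProduct_left v y
  refine ((hdot.exp.mul (hdot.sub_const c)).sub hdot.exp).congr_fderiv ?_
  ext u
  simp only [add_sub_cancel_left, _root_.smul_apply, smul_eq_mul]
  ring

section Integral

variable {X : Type*} [MeasurableSpace X] {μ : Measure X} {m : ℕ} {s : X → Fin m → ℝ}
  {f g : X → ℝ}

lemma integrable_of_abs_le_domWeight (hg : Integrable g μ) {y : Fin m → ℝ}
    (hy : ∀ᵐ x ∂μ, domWeight (s x) y (f x) ≤ g x) {h : X → ℝ}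
    (hm : AEStronglyMeasurable h μ) (hh : ∀ x, |h x| ≤ domWeight (s x) y (f x)) :
    Integrable h μ :=
  hg.mono' hm (hy.mono fun x hx => (hh x).trans hx)

lemma integrable_exp_dotProduct (hs : Measurable s) (hg : Integrable g μ) {y : Fin m → ℝ}
    (hy : ∀ᵐ x ∂μ, domWeight (s x) y (f x) ≤ g x) :
    Integrable (fun x => Real.exp (y ⬝ᵥ s x)) μ :=
  integrable_of_abs_le_domWeight hg hy (by fun_prop) fun _ => by
    rw [Real.abs_exp]; exact exp_le_domWeight

lemma integrable_exp_dotProduct_mul_sub (hs : Measurable s) (hf : Measurable f)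
    (hg : Integrable g μ) {y : Fin m → ℝ} (hy : ∀ᵐ x ∂μ, domWeight (s x) y (f x) ≤ g x) :
    Integrable (fun x => Real.exp (y ⬝ᵥ s x) * (y ⬝ᵥ s x - f x)) μ :=
  integrable_of_abs_le_domWeight hg hy (by fun_prop) fun _ => abs_exp_mul_sub_le_domWeight

lemma integrable_smul_dotCLM (hs : Measurable s) (hf : Measurable f)
    (hg : Integrable g μ) {y : Fin m → ℝ} (hy : ∀ᵐ x ∂μ, domWeight (s x) y (f x) ≤ g x) :
    Integrable (fun x => (Real.exp (y ⬝ᵥ s x) * (y ⬝ᵥ s x - f x)) • dotCLM (s x)) μ := by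
  refine (hg.const_mul m).mono' ?_ (hy.mono fun x hx => norm_smul_dotCLM_le_domWeight.trans ?_)
  · exact (by fun_prop : Measurable fun x => Real.exp (y ⬝ᵥ s x) * (y ⬝ᵥ s x - f x))
      |>.aestronglyMeasurable.smul (continuous_dotCLM.comp_aestronglyMeasurable hs.aestronglyMeasurable)
  · gcongr

theorem hasFDerivAt_integral_exp_dotProduct_mul_sub_sub (hs : Measurable s) (hf : Measurable f)
    (hg : Integrable g μ) {η : Fin m → ℝ} {U : Set (Fin m → ℝ)} (hU : U ∈ 𝓝 η)
    (hdom : ∀ y ∈ U, ∀ᵐ x ∂μ, domWeight (s x) y (f x) ≤ g x) :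
    HasFDerivAt
      (fun y => ∫ x, Real.exp (y ⬝ᵥ s x) * (y ⬝ᵥ s x - f x) - Real.exp (y ⬝ᵥ s x) ∂μ)
      (∫ x, (Real.exp (η ⬝ᵥ s x) * (η ⬝ᵥ s x - f x)) • dotCLM (s x) ∂μ) η := by
  have hdomU : ∀ᵐ x ∂μ, ∀ y ∈ U, domWeight (s x) y (f x) ≤ g x :=
    ae_forall_mem_of_isClosed (fun x => isClosed_le (continuous_domWeight _ _) continuous_const)
      hdom
  refine hasFDerivAt_integral_of_dominated_of_fderiv_le (bound := fun x => m * g x) hU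
    (Eventually.of_forall fun y => by fun_prop) ?_ ?_ ?_ (hg.const_mul _)
    (ae_of_all _ fun x y _ => hasFDerivAt_exp_dotProduct_mul_sub_sub (s x) y (f x))
  · have hη := hdom η (mem_of_mem_nhds hU)
    exact (integrable_exp_dotProduct_mul_sub hs hf hg hη).sub (integrable_exp_dotProduct hs hg hη)
  · exact (integrable_smul_dotCLM hs hf hg (hdom η (mem_of_mem_nhds hU))).aestronglyMeasurable
  · filter_upwards [hdomU] with x hx y hy
    exact norm_smul_dotCLM_le_domWeight.trans (by gcongr; exact hx y hy)

theorem hasFDerivAt_uKL (hs : Measurable s) (hf : Measurable f)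
    (hg : Integrable g μ) {η : Fin m → ℝ} {U : Set (Fin m → ℝ)} (hU : U ∈ 𝓝 η)
    (hdom : ∀ y ∈ U, ∀ᵐ x ∂μ, domWeight (s x) y (f x) ≤ g x) (C : ℝ) :
    HasFDerivAt
      (fun y => (∫ x, Real.exp (y ⬝ᵥ s x) * (y ⬝ᵥ s x - f x) ∂μ) + C
        - ∫ x, Real.exp (y ⬝ᵥ s x) ∂μ)
      (∫ x, (Real.exp (η ⬝ᵥ s x) * (η ⬝ᵥ s x - f x)) • dotCLM (s x) ∂μ) η := by
  refine ((hasFDerivAt_integral_exp_dotProduct_mul_sub_sub hs hf hg hU hdom).add_const C)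
    |>.congr_of_eventuallyEq (eventually_of_mem hU fun y hy => ?_)
  dsimp only
  rw [integral_sub (integrable_exp_dotProduct_mul_sub hs hf hg (hdom y hy))
    (integrable_exp_dotProduct hs hg (hdom y hy))]
  ring

theorem integral_exp_dotProduct_mul_sub_mul_eq (hs : Measurable s) (hf : Measurable f)
    (hg : Integrable g μ) {η : Fin m → ℝ} (hη : ∀ᵐ x ∂μ, domWeight (s x) η (f x) ≤ g x)
    (i : Fin m) :
    ∫ x, Real.exp (η ⬝ᵥ s x) * (η ⬝ᵥ s x - f x) * s x i ∂μ
      = ((of fun i j => ∫ x, s x i * s x j * Real.exp (η ⬝ᵥ s x) ∂μ) *ᵥ η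
          - fun i => ∫ x, f x * s x i * Real.exp (η ⬝ᵥ s x) ∂μ) i := by
  have hss : ∀ j, Integrable (fun x => s x i * s x j * Real.exp (η ⬝ᵥ s x)) μ := fun j =>
    integrable_of_abs_le_domWeight hg hη (by fun_prop) fun x => by
      simpa using abs_mul_mul_exp_le_domWeight (a := 1)
        (abs_one.trans_le (one_le_one_add_abs_add_abs _ _)) (abs_mul_le_one_add_sum_sq (s x) i j)
  have hfs : Integrable (fun x => f x * s x i * Real.exp (η ⬝ᵥ s x)) μ :=
    integrable_of_abs_le_domWeight hg hη (by fun_prop) fun x =>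
      abs_mul_mul_exp_le_domWeight (by linarith [abs_nonneg (η ⬝ᵥ s x)])
        (abs_le_one_add_sum_sq (s x) i)
  calc
    _ = ∫ x, (∑ j, η j * (s x i * s x j * Real.exp (η ⬝ᵥ s x)))
          - f x * s x i * Real.exp (η ⬝ᵥ s x) ∂μ := by
      refine integral_congr_ae (ae_of_all _ fun x => ?_)
      have hsum : ∑ j, η j * (s x i * s x j * Real.exp (η ⬝ᵥ s x))
          = (η ⬝ᵥ s x) * s x i * Real.exp (η ⬝ᵥ s x) := by
        simp only [dotProduct, Finset.sum_mul]
        exact Finset.sum_congr rfl fun j _ => by ring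
      dsimp only
      rw [hsum]
      ring
    _ = ∑ j, η j * (∫ x, s x i * s x j * Real.exp (η ⬝ᵥ s x) ∂μ)
          - ∫ x, f x * s x i * Real.exp (η ⬝ᵥ s x) ∂μ := by
      rw [integral_sub (integrable_finsetSum _ fun j _ => (hss j).const_mul _) hfs,
        integral_finsetSum _ fun j _ => (hss j).const_mul _]
      simp only [integral_const_mul]
    _ = _ := by simp [mulVec, dotProduct, mul_comm]

theorem eq_mulVec_sub_of_hasFDerivAt_uKL (hs : Measurable s) (hf : Measurable f)
    (hg : Integrable g μ) {η : Fin m → ℝ} {U : Set (Fin m → ℝ)} (hU : U ∈ 𝓝 η)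
    (hdom : ∀ y ∈ U, ∀ᵐ x ∂μ, domWeight (s x) y (f x) ≤ g x) {C : ℝ} {gradl : Fin m → ℝ}
    (hgrad : HasFDerivAt
      (fun y => (∫ x, Real.exp (y ⬝ᵥ s x) * (y ⬝ᵥ s x - f x) ∂μ) + C
        - ∫ x, Real.exp (y ⬝ᵥ s x) ∂μ) (dotCLM gradl) η) :
    gradl = (of fun i j => ∫ x, s x i * s x j * Real.exp (η ⬝ᵥ s x) ∂μ) *ᵥ η
      - fun i => ∫ x, f x * s x i * Real.exp (η ⬝ᵥ s x) ∂μ := by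
  have hη := hdom η (mem_of_mem_nhds hU)
  have hunique := hgrad.unique (hasFDerivAt_uKL hs hf hg hU hdom C)
  funext i
  have hi := congrArg (· (Pi.single i 1)) hunique
  simp only [dotCLM_apply_single,
    ContinuousLinearMap.integral_apply (integrable_smul_dotCLM hs hf hg hη), _root_.smul_apply,
    smul_eq_mul] at hi
  rw [hi, integral_exp_dotProduct_mul_sub_mul_eq hs hf hg hη i]

end Integral

theorem stmt5_general
    {X : Type*} [MeasurableSpace X] (μ : Measure X)
    {m : ℕ} (s : X → Fin m → ℝ) (hs : Measurable s)
    (f : X → ℝ) (hf : Measurable f)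
    (hπ0 : 0 < ∫ x, Real.exp (f x) ∂μ)
    (η : Fin m → ℝ)
    -- local domination hypothesis at `η`
    (U : Set (Fin m → ℝ)) (hU : U ∈ nhds η)
    (g : X → ℝ) (hg : Integrable g μ)
    (hdom : ∀ η' ∈ U, ∀ᵐ x ∂μ,
      (1 + ∑ i, (s x i) ^ 2) * (1 + |η' ⬝ᵥ s x| + |f x|) * Real.exp (η' ⬝ᵥ s x) ≤ g x)
    -- `Z_η`, `F_η`, `z_η`
    (Z : ℝ) (hZ : Z = ∫ x, Real.exp (η ⬝ᵥ s x) ∂μ)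
    (F : Matrix (Fin m) (Fin m) ℝ)
    (hF : F = Z⁻¹ • Matrix.of fun i j => ∫ x, s x i * s x j * Real.exp (η ⬝ᵥ s x) ∂μ)
    (z : Fin m → ℝ) (hz : z = Z⁻¹ • fun i => ∫ x, f x * s x i * Real.exp (η ⬝ᵥ s x) ∂μ)
    (hFinv : IsUnit F.det)
    (ε : ℝ)
    -- `∇l(η)`: the gradient of the uKL objective at `η`
    (gradl : Fin m → ℝ)
    (hgrad : HasFDerivAt
      (fun η' : Fin m → ℝ =>
        (∫ x, Real.exp (η' ⬝ᵥ s x) * (η' ⬝ᵥ s x - f x) ∂μ)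
          + (∫ x, Real.exp (f x) ∂μ) - ∫ x, Real.exp (η' ⬝ᵥ s x) ∂μ)
      (dotCLM gradl) η) :
    ε • (F⁻¹ *ᵥ z) + (1 - ε) • η = η - (ε / Z) • (F⁻¹ *ᵥ gradl) := by
  have hZ_pos : 0 < Z := by
    have : NeZero μ := ⟨by rintro rfl; simp at hπ0⟩
    exact hZ ▸ integral_exp_pos (integrable_exp_dotProduct hs hg (hdom η (mem_of_mem_nhds hU)))
  have hgradl : gradl = Z • (F *ᵥ η - z) := by
    rw [eq_mulVec_sub_of_hasFDerivAt_uKL hs hf hg hU hdom hgrad, hF, hz, smul_mulVec,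
      ← smul_sub, smul_smul, mul_inv_cancel₀ hZ_pos.ne', one_smul]
  rw [hgradl]
  exact smul_inv_mulVec_add_one_sub_smul_eq hFinv hZ_pos.ne' ε η z

/-- Under the local domination hypothesis at `η`, if `F_η` is invertible
and `ε > 0`, then the relaxed fixed-point iterate satisfies
`ε φ(η) + (1 − ε) η = η − (ε / Z_η) F_η⁻¹ ∇l(η)`, where `φ(η) = F_η⁻¹ z_η` and `∇l(η)` is
the gradient of `l : η' ↦ uKL(q_{η'} ∣ π)` at `η`: one LSVI step of size `ε` equals one
natural-gradient-descent step on the unnormalised KL objective of size `ε / Z_η`. -/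
theorem stmt5
    {X : Type*} [MeasurableSpace X] (μ : Measure X) [SigmaFinite μ]
    {m : ℕ} [NeZero m] (s : X → Fin m → ℝ) (hs : Measurable s)
    (hs1 : ∀ x, s x 0 = 1)
    (f : X → ℝ) (hf : Measurable f)
    (hπ0 : 0 < ∫ x, Real.exp (f x) ∂μ)
    (hπ1 : Integrable (fun x => Real.exp (f x)) μ)
    (η : Fin m → ℝ)
    -- local domination hypothesis at `η`
    (U : Set (Fin m → ℝ)) (hU : U ∈ nhds η)
    (g : X → ℝ) (hg : Integrable g μ)
    (hdom : ∀ η' ∈ U, ∀ᵐ x ∂μ,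
      (1 + ∑ i, (s x i) ^ 2) * (1 + |η' ⬝ᵥ s x| + |f x|) * Real.exp (η' ⬝ᵥ s x) ≤ g x)
    -- `Z_η`, `F_η`, `z_η`
    (Z : ℝ) (hZ : Z = ∫ x, Real.exp (η ⬝ᵥ s x) ∂μ)
    (F : Matrix (Fin m) (Fin m) ℝ)
    (hF : F = Z⁻¹ • Matrix.of fun i j => ∫ x, s x i * s x j * Real.exp (η ⬝ᵥ s x) ∂μ)
    (z : Fin m → ℝ) (hz : z = Z⁻¹ • fun i => ∫ x, f x * s x i * Real.exp (η ⬝ᵥ s x) ∂μ)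
    (hFinv : IsUnit F.det)
    (ε : ℝ) (hε : 0 < ε)
    -- `∇l(η)`: the gradient of the uKL objective at `η`
    (gradl : Fin m → ℝ)
    (hgrad : HasFDerivAt
      (fun η' : Fin m → ℝ =>
        (∫ x, Real.exp (η' ⬝ᵥ s x) * (η' ⬝ᵥ s x - f x) ∂μ)
          + (∫ x, Real.exp (f x) ∂μ) - ∫ x, Real.exp (η' ⬝ᵥ s x) ∂μ)
      (dotCLM gradl) η) :
    ε • (F⁻¹ *ᵥ z) + (1 - ε) • η = η - (ε / Z) • (F⁻¹ *ᵥ gradl) :=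
  stmt5_general μ s hs f hf hπ0 η U hU g hg hdom Z hZ F hF z hz hFinv ε gradl hgrad
end
end

section
/- Let μ, σ ∈ ℝ^d with σ_j > 0 for all j, let Z ∼ γ_d, and set X = μ + σ ⊙ Z. Let f : ℝ^d → ℝ be twice continuously differentiable with |f|, ‖∇f‖, ‖∇²f‖ bounded by a polynomial in ‖x‖, and suppose h_j := E[(∂²_{jj} f)(X)] < 0 for every j. Let β = (β⁰, β¹, β²) ∈ ℝ^{2d+1} be the unique minimiser of β' ↦ E[(β'⁰ + β'¹ ⬝ X + Σ_j β'²_j X_j² − f(X))²]. Then β²_j = ½ h_j and β¹_j = g_j − μ_j h_j, where g = E[∇f(X)]; consequently, the mean-field Gaussian with natural parameters (β¹, β²) (i.e. density proportional to exp(β¹⬝x + β²⬝x²)) has mean μ'_j = μ_j − g_j / h_j and variance σ'²_j = −1/h_j for every j. -/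
/-!
Write `u = q_β - f` for the residual of the quadratic model. Perturbing the minimiser in the
coefficients `β⁰`, `β¹_j`, `β²_j` shows that `u(X)` is L²-orthogonal to every quadratic
polynomial in `X_j`, hence to the Hermite polynomials `Z_j` and `Z_j² - 1`. Gaussian integration
by parts (Stein's identity `E[φ(Z) Z_j] = E[∂_j φ(Z)]`, applied once and twice) turns this into
`E[∂_j u(X)] = 0` and `E[∂²_jj u(X)] = 0`, which read `β¹_j + 2 β²_j μ_j = g_j` and
`2 β²_j = h_j`. Polynomial growth makes every function involved square integrable, since
Gaussian measures have moments of all orders.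
-/

open MeasureTheory Matrix

noncomputable section

def stdGaussian (d : ℕ) : Measure (Fin d → ℝ) :=
  Measure.pi fun _ => ProbabilityTheory.gaussianReal 0 1

open ProbabilityTheory (IsGaussian gaussianReal gaussianPDFReal)
open Function (update)

instance isGaussian_stdGaussian (d : ℕ) : IsGaussian (stdGaussian d) := by
  have : stdGaussian d = (ProbabilityTheory.stdGaussian (EuclideanSpace ℝ (Fin d))).map
      (PiLp.continuousLinearEquiv 2 ℝ (fun _ : Fin d => ℝ)) := by
    rw [← ProbabilityTheory.map_pi_eq_stdGaussian, Measure.map_map (by fun_prop) (by fun_prop)]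
    exact Measure.map_id.symm
  rw [this]
  infer_instance

namespace ProbabilityTheory.IsGaussian

variable {E : Type*} [NormedAddCommGroup E] [NormedSpace ℝ E] [MeasurableSpace E] [BorelSpace E]
  [CompleteSpace E] [SecondCountableTopology E] (ν : Measure E) [IsGaussian ν]

theorem integrable_one_add_norm_pow (m : ℕ) : Integrable (fun x : E => (1 + ‖x‖) ^ m) ν := by
  rcases eq_or_ne m 0 with rfl | hm
  · simp
  have hnorm : MemLp (fun x : E => ‖x‖) m ν := (memLp_id ν m (by simp)).norm
  refine (((memLp_const (1 : ℝ)).add hnorm).integrable_norm_pow hm).congr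
    (ae_of_all _ fun x => ?_)
  simp only [Pi.add_apply, Real.norm_eq_abs]
  rw [abs_of_nonneg (by positivity)]

variable {ν}

theorem memLp_two_of_abs_le {g : E → ℝ} (hg : AEStronglyMeasurable g ν) {C : ℝ} {m : ℕ}
    (hb : ∀ x, |g x| ≤ C * (1 + ‖x‖) ^ m) : MemLp g 2 ν := by
  refine (memLp_two_iff_integrable_sq hg).2 <|
    ((integrable_one_add_norm_pow ν (2 * m)).const_mul (C ^ 2)).mono' (hg.pow 2)
      (ae_of_all _ fun x => ?_)
  rw [Real.norm_eq_abs, abs_pow, pow_mul', ← mul_pow]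
  exact pow_le_pow_left₀ (abs_nonneg _) (hb x) 2

end ProbabilityTheory.IsGaussian

section Moments

variable {d : ℕ} {ν : Measure (Fin d → ℝ)} [IsGaussian ν]

lemma abs_apply_pow_le (x : Fin d → ℝ) (k : Fin d) (i : ℕ) : |x k ^ i| ≤ (1 + ‖x‖) ^ i := by
  rw [abs_pow]
  exact pow_le_pow_left₀ (abs_nonneg _)
    ((norm_le_pi_norm x k).trans (le_add_of_nonneg_left zero_le_one)) i

lemma memLp_two_apply_pow (k : Fin d) (i : ℕ) : MemLp (fun z : Fin d → ℝ => z k ^ i) 2 ν :=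
  IsGaussian.memLp_two_of_abs_le ((continuous_apply k).pow i).aestronglyMeasurable
    fun x => (abs_apply_pow_le x k i).trans_eq (one_mul _).symm

lemma one_add_norm_affine_le (μ σ z : Fin d → ℝ) :
    1 + ‖μ + σ * z‖ ≤ (1 + ‖μ‖ + ‖σ‖) * (1 + ‖z‖) := by
  nlinarith [norm_add_le μ (σ * z), norm_mul_le σ z, norm_nonneg μ, norm_nonneg σ, norm_nonneg z]

lemma memLp_two_comp_affine {F : (Fin d → ℝ) → ℝ} (hF : Measurable F) {c : ℝ} {n : ℕ}
    (hb : ∀ x, |F x| ≤ c * (1 + ‖x‖) ^ n) (μ σ : Fin d → ℝ) :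
    MemLp (fun z => F (μ + σ * z)) 2 ν := by
  refine IsGaussian.memLp_two_of_abs_le (hF.comp (by fun_prop)).aestronglyMeasurable
    (C := |c| * (1 + ‖μ‖ + ‖σ‖) ^ n) (m := n) fun z => ?_
  calc |F (μ + σ * z)| ≤ |c| * (1 + ‖μ + σ * z‖) ^ n :=
        (hb _).trans (mul_le_mul_of_nonneg_right (le_abs_self c) (by positivity))
    _ ≤ |c| * ((1 + ‖μ‖ + ‖σ‖) * (1 + ‖z‖)) ^ n := by
        gcongr
        exact one_add_norm_affine_le μ σ z
    _ = |c| * (1 + ‖μ‖ + ‖σ‖) ^ n * (1 + ‖z‖) ^ n := by rw [mul_pow, mul_assoc]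

end Moments

lemma integrable_gaussianReal_iff {μ : ℝ} {v : NNReal} (hv : v ≠ 0) {g : ℝ → ℝ} :
    Integrable g (gaussianReal μ v) ↔ Integrable (fun x => gaussianPDFReal μ v x * g x) := by
  rw [ProbabilityTheory.gaussianReal_of_var_ne_zero _ hv,
    integrable_withDensity_iff_integrable_smul' (ProbabilityTheory.measurable_gaussianPDF _ _)
      (ae_of_all _ fun _ => ProbabilityTheory.gaussianPDF_lt_top)]
  simp [ProbabilityTheory.toReal_gaussianPDF]

lemma hasDerivAt_gaussianPDFReal_zero_one (x : ℝ) :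
    HasDerivAt (gaussianPDFReal 0 1) (-x * gaussianPDFReal 0 1 x) x := by
  have h : gaussianPDFReal 0 1 = fun x => (√(2 * Real.pi))⁻¹ * Real.exp (-x ^ 2 / 2) := by
    ext x
    simp [ProbabilityTheory.gaussianPDFReal]
  rw [h]
  refine ((((hasDerivAt_pow 2 x).fun_neg.div_const 2).exp).const_mul _).congr_deriv ?_
  push_cast
  ring

theorem integral_mul_id_gaussianReal {ψ ψ' : ℝ → ℝ} (hψ : ∀ x, HasDerivAt ψ (ψ' x) x)
    (hi : Integrable ψ (gaussianReal 0 1))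
    (hix : Integrable (fun x => ψ x * x) (gaussianReal 0 1))
    (hi' : Integrable ψ' (gaussianReal 0 1)) :
    ∫ x, ψ x * x ∂gaussianReal 0 1 = ∫ x, ψ' x ∂gaussianReal 0 1 := by
  set p := gaussianPDFReal 0 1
  rw [integrable_gaussianReal_iff one_ne_zero] at hi hix hi'
  have hparts := integral_mul_deriv_eq_deriv_mul_of_integrable (u := ψ) (v := p)
    (v' := fun x => -x * p x) (fun x _ => hψ x)
    (fun x _ => hasDerivAt_gaussianPDFReal_zero_one x)
    (hix.neg.congr (ae_of_all _ fun x => by simp only [Pi.mul_apply, Pi.neg_apply]; ring))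
    (hi'.congr (ae_of_all _ fun x => by simp only [Pi.mul_apply]; ring))
    (hi.congr (ae_of_all _ fun x => by simp only [Pi.mul_apply]; ring))
  simp only [ProbabilityTheory.integral_gaussianReal_eq_integral_smul one_ne_zero, smul_eq_mul]
  calc ∫ x, p x * (ψ x * x) = -∫ x, ψ x * (-x * p x) := by
        rw [← integral_neg]
        congr 1 with x
        ring
    _ = ∫ x, p x * ψ' x := by
        rw [hparts, neg_neg]
        congr 1 with x
        ring

section Fubini

variable {n : ℕ} (j : Fin (n + 1))

lemma measurePreserving_piFinSuccAbove_stdGaussian :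
    MeasurePreserving (MeasurableEquiv.piFinSuccAbove (fun _ => ℝ) j) (stdGaussian (n + 1))
      ((gaussianReal 0 1).prod (stdGaussian n)) :=
  measurePreserving_piFinSuccAbove (fun _ => gaussianReal 0 1) j

variable {j} {g : (Fin (n + 1) → ℝ) → ℝ}

lemma integrable_comp_insertNth_stdGaussian (hg : Integrable g (stdGaussian (n + 1))) :
    Integrable (fun p : ℝ × (Fin n → ℝ) => g (j.insertNth p.1 p.2))
      ((gaussianReal 0 1).prod (stdGaussian n)) :=
  ((measurePreserving_piFinSuccAbove_stdGaussian j).symm.integrable_comp_emb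
    (MeasurableEquiv.measurableEmbedding _)).2 hg

lemma integral_stdGaussian_succ (hg : Integrable g (stdGaussian (n + 1))) :
    ∫ z, g z ∂stdGaussian (n + 1)
      = ∫ w, ∫ t, g (j.insertNth t w) ∂gaussianReal 0 1 ∂stdGaussian n := by
  rw [← integral_prod_symm _ (integrable_comp_insertNth_stdGaussian hg)]
  exact ((measurePreserving_piFinSuccAbove_stdGaussian j).symm.integral_comp' g).symm

end Fubini

section Stein

variable {d : ℕ} (j : Fin d)

theorem integral_mul_coord_stdGaussian {φ φ' : (Fin d → ℝ) → ℝ}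
    (hφ : ∀ z, HasDerivAt (fun t => φ (update z j t)) (φ' z) (z j))
    (hi : Integrable φ (stdGaussian d)) (hij : Integrable (fun z => φ z * z j) (stdGaussian d))
    (hi' : Integrable φ' (stdGaussian d)) :
    ∫ z, φ z * z j ∂stdGaussian d = ∫ z, φ' z ∂stdGaussian d := by
  cases d with
  | zero => exact j.elim0
  | succ n =>
  rw [integral_stdGaussian_succ (j := j) hij, integral_stdGaussian_succ (j := j) hi']
  refine integral_congr_ae ?_
  filter_upwards [(integrable_comp_insertNth_stdGaussian (j := j) hi).prod_left_ae,
    (integrable_comp_insertNth_stdGaussian (j := j) hij).prod_left_ae,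
    (integrable_comp_insertNth_stdGaussian (j := j) hi').prod_left_ae] with w h h₁ h'
  simp only [Fin.insertNth_apply_same] at h₁ ⊢
  refine integral_mul_id_gaussianReal (fun t => ?_) h h₁ h'
  simpa [Fin.update_insertNth] using hφ (j.insertNth t w)

lemma integral_coord_stdGaussian : ∫ z, z j ∂stdGaussian d = 0 := by
  simpa using integral_mul_coord_stdGaussian j (φ := fun _ => 1) (φ' := fun _ => 0)
    (fun _ => hasDerivAt_const _ _) (integrable_const _)
    (by simpa using (memLp_two_apply_pow j 1).integrable one_le_two) (integrable_const _)

theorem integral_mul_coord_sq_sub_one_stdGaussian {φ φ' φ'' : (Fin d → ℝ) → ℝ}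
    (hφ : ∀ z, HasDerivAt (fun t => φ (update z j t)) (φ' z) (z j))
    (hφ' : ∀ z, HasDerivAt (fun t => φ' (update z j t)) (φ'' z) (z j))
    (h : MemLp φ 2 (stdGaussian d)) (h' : MemLp φ' 2 (stdGaussian d))
    (h'' : Integrable φ'' (stdGaussian d)) :
    ∫ z, φ z * (z j ^ 2 - 1) ∂stdGaussian d = ∫ z, φ'' z ∂stdGaussian d := by
  have hz : MemLp (fun z : Fin d → ℝ => z j) 2 (stdGaussian d) := by
    simpa using memLp_two_apply_pow j 1
  have hφz : Integrable (fun z => φ z * z j) (stdGaussian d) := h.integrable_mul hz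
  have hφz2 : Integrable (fun z => φ z * z j * z j) (stdGaussian d) :=
    (h.integrable_mul (memLp_two_apply_pow j 2)).congr
      (ae_of_all _ fun z => by simp only [Pi.mul_apply]; ring)
  have hφ'z : Integrable (fun z => φ' z * z j) (stdGaussian d) := h'.integrable_mul hz
  have hφi : Integrable φ (stdGaussian d) := h.integrable one_le_two
  have first : ∫ z, φ z * z j * z j ∂stdGaussian d = ∫ z, (φ z + φ' z * z j) ∂stdGaussian d := by
    refine integral_mul_coord_stdGaussian j (fun z => ?_) hφz hφz2 (hφi.add hφ'z)
    simpa [add_comm] using (hφ z).fun_mul (hasDerivAt_id (z j))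
  have second := integral_mul_coord_stdGaussian j hφ' (h'.integrable one_le_two) hφ'z h''
  calc ∫ z, φ z * (z j ^ 2 - 1) ∂stdGaussian d
      = ∫ z, φ z * z j * z j ∂stdGaussian d - ∫ z, φ z ∂stdGaussian d := by
        rw [← integral_sub hφz2 hφi]
        congr 1 with z
        ring
    _ = ∫ z, φ'' z ∂stdGaussian d := by
        rw [first, integral_add hφi hφ'z, second]
        ring

end Stein

section Calculus

variable {d : ℕ}

lemma affine_update (μ σ z : Fin d → ℝ) (j : Fin d) (t : ℝ) :
    μ + σ * update z j t = update (μ + σ * z) j (μ j + σ j * t) := by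
  ext k
  rcases eq_or_ne k j with rfl | hk
  · simp
  · simp [Function.update_of_ne hk]

lemma DifferentiableAt.hasDerivAt_comp_update {F : (Fin d → ℝ) → ℝ} {x : Fin d → ℝ}
    (hF : DifferentiableAt ℝ F x) (j : Fin d) :
    HasDerivAt (fun s => F (update x j s)) (fderiv ℝ F x (Pi.single j 1)) (x j) := by
  rw [← Function.update_eq_self j x] at hF
  have := hF.hasFDerivAt.comp_hasDerivAt (x j) (hasDerivAt_update x j (x j))
  rwa [Function.update_eq_self] at this

lemma fderiv_fderiv_apply_apply {f : (Fin d → ℝ) → ℝ} {x : Fin d → ℝ}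
    (h : DifferentiableAt ℝ (fderiv ℝ f) x) (v w : Fin d → ℝ) :
    fderiv ℝ (fun y => fderiv ℝ f y v) x w = fderiv ℝ (fderiv ℝ f) x w v := by
  rw [(h.hasFDerivAt.clm_apply (hasFDerivAt_const v x)).fderiv]
  simp

lemma abs_apply_single_le (L : (Fin d → ℝ) →L[ℝ] ℝ) (j : Fin d) :
    |L (Pi.single j 1)| ≤ ‖L‖ := by
  simpa [Pi.norm_single] using L.le_opNorm (Pi.single j 1)

lemma abs_apply_single_single_le (B : (Fin d → ℝ) →L[ℝ] (Fin d → ℝ) →L[ℝ] ℝ) (j : Fin d) :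
    |B (Pi.single j 1) (Pi.single j 1)| ≤ ‖B‖ := by
  simpa [Pi.norm_single] using B.le_opNorm₂ (Pi.single j 1) (Pi.single j 1)

end Calculus

section Affine

variable {d : ℕ} {μ σ : Fin d → ℝ} {j : Fin d}

lemma HasDerivAt.comp_affine_update {G : (Fin d → ℝ) → ℝ} {G' : ℝ} {z : Fin d → ℝ}
    (h : HasDerivAt (fun s => G (update (μ + σ * z) j s)) G' (μ j + σ j * z j)) :
    HasDerivAt (fun t => G (μ + σ * update z j t)) (σ j * G') (z j) := by
  have hline : HasDerivAt (fun t => μ j + σ j * t) (σ j) (z j) := by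
    simpa using ((hasDerivAt_id (z j)).const_mul (σ j)).const_add (μ j)
  simp only [affine_update]
  rw [mul_comm (σ j) G']
  exact h.comp (z j) hline

theorem integral_partial_comp_affine_eq_zero {u u' u'' : (Fin d → ℝ) → ℝ} (hσ : σ j ≠ 0)
    (hu : ∀ x, HasDerivAt (fun s => u (update x j s)) (u' x) (x j))
    (hu' : ∀ x, HasDerivAt (fun s => u' (update x j s)) (u'' x) (x j))
    (h : MemLp (fun z => u (μ + σ * z)) 2 (stdGaussian d))
    (h' : MemLp (fun z => u' (μ + σ * z)) 2 (stdGaussian d))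
    (h'' : Integrable (fun z => u'' (μ + σ * z)) (stdGaussian d))
    (h₁ : ∫ z, u (μ + σ * z) * z j ∂stdGaussian d = 0)
    (h₂ : ∫ z, u (μ + σ * z) * (z j ^ 2 - 1) ∂stdGaussian d = 0) :
    ∫ z, u' (μ + σ * z) ∂stdGaussian d = 0 ∧ ∫ z, u'' (μ + σ * z) ∂stdGaussian d = 0 := by
  have hr (z : Fin d → ℝ) := (hu (μ + σ * z)).comp_affine_update
  have hr' (z : Fin d → ℝ) := ((hu' (μ + σ * z)).comp_affine_update).const_mul (σ j)
  have hz : MemLp (fun z : Fin d → ℝ => z j) 2 (stdGaussian d) := by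
    simpa using memLp_two_apply_pow j 1
  have first := integral_mul_coord_stdGaussian j hr (h.integrable one_le_two)
    (h.integrable_mul hz) ((h'.integrable one_le_two).const_mul _)
  have second := integral_mul_coord_sq_sub_one_stdGaussian j hr hr' h (h'.const_mul _)
    ((h''.const_mul _).const_mul _)
  rw [h₁, integral_const_mul] at first
  rw [h₂, integral_const_mul, integral_const_mul] at second
  exact ⟨(mul_eq_zero.1 first.symm).resolve_left hσ,
    (mul_eq_zero.1 ((mul_eq_zero.1 second.symm).resolve_left hσ)).resolve_left hσ⟩

end Affine

theorem integral_mul_eq_zero_of_forall_integral_sq_le {Ω : Type*} [MeasurableSpace Ω]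
    {ν : Measure Ω} {ρ B : Ω → ℝ} (hρ : MemLp ρ 2 ν) (hB : MemLp B 2 ν)
    (h : ∀ t : ℝ, ∫ ω, ρ ω ^ 2 ∂ν ≤ ∫ ω, (ρ ω + t * B ω) ^ 2 ∂ν) :
    ∫ ω, ρ ω * B ω ∂ν = 0 := by
  have hρB : Integrable (fun ω => ρ ω * B ω) ν := hρ.integrable_mul hB
  have expand (t : ℝ) : ∫ ω, (ρ ω + t * B ω) ^ 2 ∂ν
      = ∫ ω, ρ ω ^ 2 ∂ν + ((∫ ω, B ω ^ 2 ∂ν) * (t * t) + (∫ ω, ρ ω * B ω ∂ν) * (2 * t)) := by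
    rw [← integral_mul_const, ← integral_mul_const, ← integral_add, ← integral_add]
    · congr 1 with ω
      ring
    · exact hρ.integrable_sq
    · exact (hB.integrable_sq.mul_const _).add (hρB.mul_const _)
    · exact hB.integrable_sq.mul_const _
    · exact hρB.mul_const _
  have hdiscrim := discrim_le_zero (a := ∫ ω, B ω ^ 2 ∂ν) (b := 2 * ∫ ω, ρ ω * B ω ∂ν) (c := 0)
    fun t => by linarith [h t, expand t]
  rw [discrim] at hdiscrim
  nlinarith [sq_nonneg (∫ ω, ρ ω * B ω ∂ν)]

def quadModel {d : ℕ} (β0 : ℝ) (β1 β2 x : Fin d → ℝ) : ℝ :=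
  β0 + β1 ⬝ᵥ x + ∑ k, β2 k * x k ^ 2

lemma sum_apply_update {ι α M : Type*} [Fintype ι] [DecidableEq ι] [AddCommMonoid M]
    (g : ι → α → M) (x : ι → α) (j : ι) (s : α) :
    ∑ k, g k (update x j s k) = g j s + ∑ k ∈ Finset.univ.erase j, g k (x k) := by
  rw [← Finset.add_sum_erase _ _ (Finset.mem_univ j), Function.update_self]
  congr 1
  exact Finset.sum_congr rfl fun k hk => by rw [Function.update_of_ne (Finset.ne_of_mem_erase hk)]

section QuadModel

variable {d : ℕ} (β0 : ℝ) (β1 β2 : Fin d → ℝ) (j : Fin d)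

lemma quadModel_add_single (a b c : ℝ) (x : Fin d → ℝ) :
    quadModel (β0 + a) (β1 + Pi.single j b) (β2 + Pi.single j c) x
      = quadModel β0 β1 β2 x + (a + b * x j + c * x j ^ 2) := by
  simp only [quadModel, add_dotProduct, single_dotProduct, Pi.add_apply, add_mul,
    Finset.sum_add_distrib, Pi.single_apply, ite_mul, zero_mul, Finset.sum_ite_eq',
    Finset.mem_univ, if_true]
  ring

lemma hasDerivAt_quadModel_update (x : Fin d → ℝ) :
    HasDerivAt (fun s => quadModel β0 β1 β2 (update x j s)) (β1 j + 2 * β2 j * x j) (x j) := by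
  have e : (fun s => quadModel β0 β1 β2 (update x j s)) = fun s => β1 j * s + β2 j * s ^ 2
      + (β0 + ∑ k ∈ Finset.univ.erase j, β1 k * x k
        + ∑ k ∈ Finset.univ.erase j, β2 k * x k ^ 2) := by
    funext s
    simp only [quadModel, dotProduct, sum_apply_update (fun k y => β1 k * y),
      sum_apply_update (fun k y => β2 k * y ^ 2)]
    ring
  rw [e]
  refine (((hasDerivAt_id _).const_mul _).add ((hasDerivAt_pow 2 _).const_mul _)).add_const _
    |>.congr_deriv ?_
  simp only [mul_one, Nat.cast_ofNat, Nat.add_one_sub_one, pow_one]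
  ring

lemma hasDerivAt_residual_update {f : (Fin d → ℝ) → ℝ} {x : Fin d → ℝ}
    (hf : DifferentiableAt ℝ f x) :
    HasDerivAt (fun s => quadModel β0 β1 β2 (update x j s) - f (update x j s))
      (β1 j + 2 * β2 j * x j - fderiv ℝ f x (Pi.single j 1)) (x j) :=
  (hasDerivAt_quadModel_update β0 β1 β2 j x).sub (hf.hasDerivAt_comp_update j)

lemma hasDerivAt_partial_residual_update {f : (Fin d → ℝ) → ℝ} {x : Fin d → ℝ}
    (hf : DifferentiableAt ℝ (fun y => fderiv ℝ f y (Pi.single j 1)) x) :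
    HasDerivAt
      (fun s => β1 j + 2 * β2 j * update x j s j - fderiv ℝ f (update x j s) (Pi.single j 1))
      (2 * β2 j - fderiv ℝ (fun y => fderiv ℝ f y (Pi.single j 1)) x (Pi.single j 1)) (x j) := by
  simp only [Function.update_self]
  exact ((((hasDerivAt_id _).const_mul _).const_add _).sub
    (hf.hasDerivAt_comp_update j)).congr_deriv (by ring)

end QuadModel

theorem integral_quadModel_residual_mul_eq_zero {d : ℕ} {Ω : Type*} [MeasurableSpace Ω]
    {ν : Measure Ω} {X : Ω → Fin d → ℝ} {f : (Fin d → ℝ) → ℝ} {β0 : ℝ} {β1 β2 : Fin d → ℝ}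
    (hmin : ∀ (b0 : ℝ) (b1 b2 : Fin d → ℝ),
      ∫ ω, (quadModel β0 β1 β2 (X ω) - f (X ω)) ^ 2 ∂ν
        ≤ ∫ ω, (quadModel b0 b1 b2 (X ω) - f (X ω)) ^ 2 ∂ν)
    (hr : MemLp (fun ω => quadModel β0 β1 β2 (X ω) - f (X ω)) 2 ν) (j : Fin d) (a b c : ℝ)
    (hB : MemLp (fun ω => a + b * X ω j + c * X ω j ^ 2) 2 ν) :
    ∫ ω, (quadModel β0 β1 β2 (X ω) - f (X ω)) * (a + b * X ω j + c * X ω j ^ 2) ∂ν = 0 := by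
  refine integral_mul_eq_zero_of_forall_integral_sq_le hr hB fun t => ?_
  refine (hmin (β0 + t * a) (β1 + Pi.single j (t * b)) (β2 + Pi.single j (t * c))).trans_eq ?_
  congr 1 with ω
  rw [quadModel_add_single]
  ring

section LeastSquares

variable {d : ℕ} {μ σ : Fin d → ℝ} {f : (Fin d → ℝ) → ℝ} {β0 : ℝ} {β1 β2 : Fin d → ℝ}

lemma memLp_two_comp_affine_apply_pow (k : Fin d) (i : ℕ) :
    MemLp (fun z => (μ + σ * z) k ^ i) 2 (stdGaussian d) :=
  memLp_two_comp_affine (by fun_prop)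
    (fun x => (abs_apply_pow_le x k i).trans_eq (one_mul _).symm) μ σ

lemma integral_comp_affine_apply (k : Fin d) : ∫ z, (μ + σ * z) k ∂stdGaussian d = μ k := by
  have hz : Integrable (fun z : Fin d → ℝ => z k) (stdGaussian d) := by
    simpa using (memLp_two_apply_pow k 1).integrable one_le_two
  simp only [Pi.add_apply, Pi.mul_apply]
  rw [integral_add (integrable_const _) (hz.const_mul _), integral_const_mul,
    integral_coord_stdGaussian]
  simp

lemma memLp_two_quadModel_comp_affine :
    MemLp (fun z => quadModel β0 β1 β2 (μ + σ * z)) 2 (stdGaussian d) := by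
  have h1 : MemLp (fun z => β1 ⬝ᵥ (μ + σ * z)) 2 (stdGaussian d) :=
    memLp_finsetSum _ fun k _ => by
      simpa using (memLp_two_comp_affine_apply_pow k 1).const_mul (β1 k)
  have h2 : MemLp (fun z => ∑ k, β2 k * (μ + σ * z) k ^ 2) 2 (stdGaussian d) :=
    memLp_finsetSum _ fun k _ => (memLp_two_comp_affine_apply_pow k 2).const_mul (β2 k)
  exact ((memLp_const β0).add h1).add h2

theorem integral_residual_mul_hermite_eq_zero {j : Fin d} (hσ : σ j ≠ 0)
    (hmin : ∀ (b0 : ℝ) (b1 b2 : Fin d → ℝ),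
      ∫ z, (quadModel β0 β1 β2 (μ + σ * z) - f (μ + σ * z)) ^ 2 ∂stdGaussian d
        ≤ ∫ z, (quadModel b0 b1 b2 (μ + σ * z) - f (μ + σ * z)) ^ 2 ∂stdGaussian d)
    (hr : MemLp (fun z => quadModel β0 β1 β2 (μ + σ * z) - f (μ + σ * z)) 2 (stdGaussian d)) :
    ∫ z, (quadModel β0 β1 β2 (μ + σ * z) - f (μ + σ * z)) * z j ∂stdGaussian d = 0
    ∧ ∫ z, (quadModel β0 β1 β2 (μ + σ * z) - f (μ + σ * z)) * (z j ^ 2 - 1)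
        ∂stdGaussian d = 0 := by
  have hB (a b c : ℝ) :
      MemLp (fun z => a + b * (μ + σ * z) j + c * (μ + σ * z) j ^ 2) 2 (stdGaussian d) :=
    ((memLp_const a).add (by simpa using (memLp_two_comp_affine_apply_pow j 1).const_mul b)).add
      ((memLp_two_comp_affine_apply_pow j 2).const_mul c)
  have normal (a b c : ℝ) := integral_quadModel_residual_mul_eq_zero
    (X := fun z => μ + σ * z) hmin hr j a b c (hB a b c)
  -- `z_j` and `z_j² - 1` are quadratic polynomials in `X_j = μ_j + σ_j z_j`
  constructor
  · rw [← normal (-μ j / σ j) (1 / σ j) 0]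
    congr 1 with z
    simp only [Pi.add_apply, Pi.mul_apply]
    field_simp
    ring
  · rw [← normal (μ j ^ 2 / σ j ^ 2 - 1) (-2 * μ j / σ j ^ 2) (1 / σ j ^ 2)]
    congr 1 with z
    simp only [Pi.add_apply, Pi.mul_apply]
    field_simp
    ring

lemma memLp_two_fderiv_apply_single_comp_affine {c : ℝ} {n : ℕ} (j : Fin d)
    (hf1 : ∀ x, ‖fderiv ℝ f x‖ ≤ c * (1 + ‖x‖) ^ n) :
    MemLp (fun z => fderiv ℝ f (μ + σ * z) (Pi.single j 1)) 2 (stdGaussian d) :=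
  memLp_two_comp_affine (measurable_fderiv_apply_const ℝ f _)
    (fun x => (abs_apply_single_le _ j).trans (hf1 x)) μ σ

lemma memLp_two_fderiv_fderiv_apply_single_comp_affine {c : ℝ} {n : ℕ} (j : Fin d)
    (hf : Differentiable ℝ (fderiv ℝ f))
    (hf2 : ∀ x, ‖fderiv ℝ (fderiv ℝ f) x‖ ≤ c * (1 + ‖x‖) ^ n) :
    MemLp (fun z => fderiv ℝ (fun y => fderiv ℝ f y (Pi.single j 1)) (μ + σ * z) (Pi.single j 1))
      2 (stdGaussian d) :=
  memLp_two_comp_affine (measurable_fderiv_apply_const ℝ _ _) (fun x => by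
    rw [fderiv_fderiv_apply_apply (hf x)]
    exact (abs_apply_single_single_le _ j).trans (hf2 x)) μ σ

theorem quadModel_coeff_eq_of_forall_le {c : ℝ} {n : ℕ} {j : Fin d} (hσ : σ j ≠ 0)
    (hf : ContDiff ℝ 2 f) (hf0 : ∀ x, |f x| ≤ c * (1 + ‖x‖) ^ n)
    (hf1 : ∀ x, ‖fderiv ℝ f x‖ ≤ c * (1 + ‖x‖) ^ n)
    (hf2 : ∀ x, ‖fderiv ℝ (fderiv ℝ f) x‖ ≤ c * (1 + ‖x‖) ^ n)
    (hmin : ∀ (b0 : ℝ) (b1 b2 : Fin d → ℝ),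
      ∫ z, (quadModel β0 β1 β2 (μ + σ * z) - f (μ + σ * z)) ^ 2 ∂stdGaussian d
        ≤ ∫ z, (quadModel b0 b1 b2 (μ + σ * z) - f (μ + σ * z)) ^ 2 ∂stdGaussian d) :
    2 * β2 j = ∫ z, fderiv ℝ (fun y => fderiv ℝ f y (Pi.single j 1)) (μ + σ * z)
        (Pi.single j 1) ∂stdGaussian d
    ∧ β1 j + 2 * β2 j * μ j = ∫ z, fderiv ℝ f (μ + σ * z) (Pi.single j 1) ∂stdGaussian d := by
  have hDf : Differentiable ℝ (fderiv ℝ f) :=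
    (hf.fderiv_right (m := 1) (by norm_num)).differentiable one_ne_zero
  have hF1 := memLp_two_fderiv_apply_single_comp_affine (μ := μ) (σ := σ) j hf1
  have hF2 := memLp_two_fderiv_fderiv_apply_single_comp_affine (μ := μ) (σ := σ) j hDf hf2
  have hr : MemLp (fun z => quadModel β0 β1 β2 (μ + σ * z) - f (μ + σ * z)) 2
      (stdGaussian d) :=
    memLp_two_quadModel_comp_affine.sub (memLp_two_comp_affine hf.continuous.measurable hf0 μ σ)
  have hXj : MemLp (fun z => (μ + σ * z) j) 2 (stdGaussian d) := by
    simpa using memLp_two_comp_affine_apply_pow (μ := μ) (σ := σ) j 1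
  obtain ⟨h₁, h₂⟩ := integral_residual_mul_hermite_eq_zero hσ hmin hr
  obtain ⟨e₁, e₂⟩ := integral_partial_comp_affine_eq_zero
    (u := fun x => quadModel β0 β1 β2 x - f x) hσ
    (fun x => hasDerivAt_residual_update β0 β1 β2 j (hf.differentiable (by norm_num) x))
    (fun x => hasDerivAt_partial_residual_update β1 β2 j
      ((hDf x).clm_apply (differentiableAt_const _)))
    hr (((memLp_const (β1 j)).add (hXj.const_mul (2 * β2 j))).sub hF1)
    (((memLp_const (2 * β2 j)).sub hF2).integrable one_le_two) h₁ h₂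
  have hXi := hXj.integrable one_le_two
  have hlin : Integrable (fun z => β1 j + 2 * β2 j * (μ + σ * z) j) (stdGaussian d) :=
    (integrable_const _).add (hXi.const_mul _)
  rw [integral_sub (integrable_const _) (hF2.integrable one_le_two), integral_const] at e₂
  rw [integral_sub hlin (hF1.integrable one_le_two),
    integral_add (integrable_const _) (hXi.const_mul _), integral_const, integral_const_mul,
    integral_comp_affine_apply] at e₁
  simp only [probReal_univ, one_smul] at e₁ e₂
  constructor <;> linarith

end LeastSquares

theorem stmt15_general
    {d : ℕ} (μv σ : Fin d → ℝ) (hσ : ∀ j, 0 < σ j)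
    (f : (Fin d → ℝ) → ℝ) (hf : ContDiff ℝ 2 f)
    (c : ℝ) (n : ℕ)
    (hbound : ∀ x : Fin d → ℝ,
      |f x| ≤ c * (1 + ‖x‖) ^ n ∧ ‖fderiv ℝ f x‖ ≤ c * (1 + ‖x‖) ^ n ∧
        ‖fderiv ℝ (fderiv ℝ f) x‖ ≤ c * (1 + ‖x‖) ^ n)
    -- `g = E[∇f(X)]` and `h_j = E[(∂²_{jj} f)(X)]`
    (gv : Fin d → ℝ)
    (hgv : gv = fun j => ∫ z, fderiv ℝ f (μv + σ * z) (Pi.single j 1) ∂stdGaussian d)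
    (hv : Fin d → ℝ)
    (hhv : hv = fun j => ∫ z, fderiv ℝ (fun y => fderiv ℝ f y (Pi.single j 1)) (μv + σ * z)
      (Pi.single j 1) ∂stdGaussian d)
    (hneg : ∀ j, hv j < 0)
    -- `β` is the unique minimiser of the mean-field least-squares objective
    (β0 : ℝ) (β1 β2 : Fin d → ℝ)
    (hmin : ∀ (b0 : ℝ) (b1 b2 : Fin d → ℝ),
      (∫ z, (β0 + β1 ⬝ᵥ (μv + σ * z) + (∑ j, β2 j * ((μv + σ * z) j) ^ 2)
          - f (μv + σ * z)) ^ 2 ∂stdGaussian d)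
        ≤ ∫ z, (b0 + b1 ⬝ᵥ (μv + σ * z) + (∑ j, b2 j * ((μv + σ * z) j) ^ 2)
            - f (μv + σ * z)) ^ 2 ∂stdGaussian d) :
    (∀ j, β2 j = hv j / 2)
    ∧ (∀ j, β1 j = gv j - μv j * hv j)
    ∧ (∀ j, -(β1 j) / (2 * β2 j) = μv j - gv j / hv j)
    ∧ (∀ j, -(1 : ℝ) / (2 * β2 j) = -(1 : ℝ) / hv j) := by
  have key (j : Fin d) := quadModel_coeff_eq_of_forall_le (hσ j).ne' hf (fun x => (hbound x).1)
    (fun x => (hbound x).2.1) (fun x => (hbound x).2.2) hmin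
  have hβ2 (j : Fin d) : 2 * β2 j = hv j := by rw [hhv]; exact (key j).1
  have hgβ (j : Fin d) : gv j = β1 j + 2 * β2 j * μv j := by rw [hgv]; exact (key j).2.symm
  have hβ1 (j : Fin d) : β1 j = gv j - μv j * hv j := by rw [hgβ, ← hβ2]; ring
  refine ⟨fun j => by linarith [hβ2 j], hβ1, fun j => ?_, fun j => by rw [hβ2]⟩
  rw [hβ1, hβ2]
  field_simp [(hneg j).ne]
  ring

/-- With `X = μ + σ ⊙ Z`, `σ_j > 0`, `f` twice continuously
differentiable with polynomially bounded `|f|`, `‖∇f‖`, `‖∇²f‖`, and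
`h_j = E[(∂²_{jj} f)(X)] < 0` for all `j`, the unique minimiser `β = (β⁰, β¹, β²)` of the
mean-field least-squares objective satisfies `β²_j = ½ h_j` and `β¹_j = g_j − μ_j h_j`
where `g = E[∇f(X)]`; consequently the mean-field Gaussian with natural parameters
`(β¹, β²)` has mean `μ'_j = μ_j − g_j/h_j` and variance `σ'²_j = −1/h_j`. -/
theorem stmt15
    {d : ℕ} (μv σ : Fin d → ℝ) (hσ : ∀ j, 0 < σ j)
    (f : (Fin d → ℝ) → ℝ) (hf : ContDiff ℝ 2 f)
    (c : ℝ) (n : ℕ)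
    (hbound : ∀ x : Fin d → ℝ,
      |f x| ≤ c * (1 + ‖x‖) ^ n ∧ ‖fderiv ℝ f x‖ ≤ c * (1 + ‖x‖) ^ n ∧
        ‖fderiv ℝ (fderiv ℝ f) x‖ ≤ c * (1 + ‖x‖) ^ n)
    -- `g = E[∇f(X)]` and `h_j = E[(∂²_{jj} f)(X)]`
    (gv : Fin d → ℝ)
    (hgv : gv = fun j => ∫ z, fderiv ℝ f (μv + σ * z) (Pi.single j 1) ∂stdGaussian d)
    (hv : Fin d → ℝ)
    (hhv : hv = fun j => ∫ z, fderiv ℝ (fun y => fderiv ℝ f y (Pi.single j 1)) (μv + σ * z)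
      (Pi.single j 1) ∂stdGaussian d)
    (hneg : ∀ j, hv j < 0)
    -- `β` is the unique minimiser of the mean-field least-squares objective
    (β0 : ℝ) (β1 β2 : Fin d → ℝ)
    (hmin : ∀ (b0 : ℝ) (b1 b2 : Fin d → ℝ),
      (∫ z, (β0 + β1 ⬝ᵥ (μv + σ * z) + (∑ j, β2 j * ((μv + σ * z) j) ^ 2)
          - f (μv + σ * z)) ^ 2 ∂stdGaussian d)
        ≤ ∫ z, (b0 + b1 ⬝ᵥ (μv + σ * z) + (∑ j, b2 j * ((μv + σ * z) j) ^ 2)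
            - f (μv + σ * z)) ^ 2 ∂stdGaussian d)
    (huniq : ∀ (b0 : ℝ) (b1 b2 : Fin d → ℝ),
      (∀ (c0 : ℝ) (c1 c2 : Fin d → ℝ),
        (∫ z, (b0 + b1 ⬝ᵥ (μv + σ * z) + (∑ j, b2 j * ((μv + σ * z) j) ^ 2)
            - f (μv + σ * z)) ^ 2 ∂stdGaussian d)
          ≤ ∫ z, (c0 + c1 ⬝ᵥ (μv + σ * z) + (∑ j, c2 j * ((μv + σ * z) j) ^ 2)
              - f (μv + σ * z)) ^ 2 ∂stdGaussian d) →
      b0 = β0 ∧ b1 = β1 ∧ b2 = β2) :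
    (∀ j, β2 j = hv j / 2)
    ∧ (∀ j, β1 j = gv j - μv j * hv j)
    ∧ (∀ j, -(β1 j) / (2 * β2 j) = μv j - gv j / hv j)
    ∧ (∀ j, -(1 : ℝ) / (2 * β2 j) = -(1 : ℝ) / hv j) :=
  stmt15_general μv σ hσ f hf c n hbound gv hgv hv hhv hneg β0 β1 β2 hmin
end
end
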